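/- For partitions X and Y of Ω, μ(ΔX ∩ ΔY) ≥ 0; i.e., the total measure of atoms crossed by both variables is nonnegative, even though individual atoms may have negative measure. -/

import Mathlib

open Finset BigOperators

variable {Ω : Type*} [Fintype Ω] [DecidableEq Ω]

/-- Probability of a subset: `p(T) = Σ_{ω∈T} p(ω)`. -/
def pS (p : Ω → ℝ) (T : Finset Ω) : ℝ := ∑ ω ∈ T, p ω

/-- `p(T) log p(T)` (with `0 log 0 = 0` since `Real.log 0 = 0`). -/
noncomputable def plog (p : Ω → ℝ) (T : Finset Ω) : ℝ := pS p T * Real.log (pS p T)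

/-- The interior-loss measure of an atom `S`. -/
noncomputable def mu (p : Ω → ℝ) (S : Finset Ω) : ℝ :=
  ∑ T ∈ S.powerset.filter (· ≠ ∅), (-1 : ℝ) ^ (S.card - T.card) * plog p T

/-- `μ` of a set of atoms, extended additively. -/
noncomputable def muSet (p : Ω → ℝ) (R : Finset (Finset Ω)) : ℝ := ∑ S ∈ R, mu p S

/-- A partition `X` crosses an atom `S` when `S` meets at least two distinct parts. -/
def crossed (X : Finpartition (univ : Finset Ω)) (S : Finset Ω) : Prop :=
  ∃ P ∈ X.parts, ∃ Q ∈ X.parts, P ≠ Q ∧ (S ∩ P).Nonempty ∧ (S ∩ Q).Nonempty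

open scoped Classical in
/-- The content `ΔX`: set of atoms crossed by the partition `X`. -/
noncomputable def content (X : Finpartition (univ : Finset Ω)) : Finset (Finset Ω) :=
  (univ : Finset (Finset Ω)).filter (fun S => 2 ≤ S.card ∧ crossed X S)

/-- Shannon entropy of a partition. -/
noncomputable def Hent (p : Ω → ℝ) (X : Finpartition (univ : Finset Ω)) : ℝ :=
  - ∑ P ∈ X.parts, pS p P * Real.log (pS p P)

/-- `X` refines `Z`: every part of `X` lies in a part of `Z`. -/
def refines (X Z : Finpartition (univ : Finset Ω)) : Prop :=
  ∀ P ∈ X.parts, ∃ Q ∈ Z.parts, P ⊆ Q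


/-!
Möbius inversion over the Boolean lattice gives `∑_{S ⊆ U} μ(S) = p(U) log p(U)`. The atoms not
crossed by a partition `X` are exactly the subsets of its parts, so `μ(ΔX) = H(X)` when `p` has
total mass one. Since the atoms crossed by the common refinement `X ⊓ Y` are those crossed by `X`
or by `Y`, inclusion–exclusion gives `μ(ΔX ∩ ΔY) = H(X) + H(Y) - H(X ⊓ Y) = I(X;Y)`, and this is
nonnegative by Gibbs' inequality `a log (a / bc) ≥ a - bc`.
-/

open scoped Classical

lemma plog_empty {α : Type*} (p : α → ℝ) : plog p ∅ = 0 := by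
  simp [plog, pS]

section Moebius

variable {α : Type*} [DecidableEq α]

lemma sum_Icc_neg_one_pow_card_sub {R : Type*} [Ring R] {T U : Finset α} (hTU : T ⊆ U) :
    ∑ S ∈ Icc T U, (-1 : R) ^ (#S - #T) = if T = U then 1 else 0 := by
  have hdisj : ∀ W ∈ (U \ T).powerset, Disjoint T W := fun W hW =>
    disjoint_of_subset_right (mem_powerset.1 hW) disjoint_sdiff
  rw [Icc_eq_image_powerset hTU, sum_image fun W hW W' hW' h => by
    rw [← union_sdiff_cancel_left (hdisj W hW), h, union_sdiff_cancel_left (hdisj W' hW')]]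
  have hcard : ∀ W ∈ (U \ T).powerset, (-1 : R) ^ (#(T ∪ W) - #T) = (-1) ^ #W := fun W hW => by
    rw [card_union_of_disjoint (hdisj W hW), Nat.add_sub_cancel_left]
  have h := congrArg (Int.cast : ℤ → R) (sum_powerset_neg_one_pow_card (x := U \ T))
  push_cast at h
  rw [sum_congr rfl hcard, h]
  exact if_congr ⟨fun h' => hTU.antisymm (sdiff_eq_empty_iff_subset.1 h'),
    fun h' => sdiff_eq_empty_iff_subset.2 h'.ge⟩ rfl rfl

lemma mu_eq_sum_powerset (p : α → ℝ) (S : Finset α) :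
    mu p S = ∑ T ∈ S.powerset, (-1 : ℝ) ^ (#S - #T) * plog p T := by
  rw [mu, sum_filter_of_ne]
  rintro T - h rfl
  simp [plog_empty] at h

lemma mu_empty (p : α → ℝ) : mu p ∅ = 0 := by
  simp [mu_eq_sum_powerset, plog_empty]

lemma sum_powerset_mu (p : α → ℝ) (U : Finset α) :
    ∑ S ∈ U.powerset, mu p S = plog p U := by
  simp_rw [mu_eq_sum_powerset]
  rw [sum_comm' (t' := U.powerset) (s' := fun T => Icc T U) fun S T => by
    simp only [mem_powerset, mem_Icc]
    exact ⟨fun h => ⟨⟨h.2, h.1⟩, h.2.trans h.1⟩, fun h => ⟨h.1.2, h.1.1⟩⟩]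
  simp_rw [← sum_mul]
  rw [sum_congr rfl fun T hT => by rw [sum_Icc_neg_one_pow_card_sub (mem_powerset.1 hT)]]
  simp

lemma muSet_univ [Fintype α] (p : α → ℝ) : muSet p univ = plog p univ := by
  rw [muSet, ← powerset_univ, sum_powerset_mu]

end Moebius

section Partition

variable {X Y Z : Finpartition (univ : Finset Ω)} {S : Finset Ω}

lemma crossed.nonempty (h : crossed X S) : S.Nonempty := by
  obtain ⟨_, _, _, _, _, hSP, _⟩ := h
  exact hSP.mono inter_subset_left

lemma crossed.two_le_card (h : crossed X S) : 2 ≤ #S := by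
  obtain ⟨P, hP, Q, hQ, hPQ, ⟨a, ha⟩, ⟨b, hb⟩⟩ := h
  rw [mem_inter] at ha hb
  refine one_lt_card.2 ⟨a, ha.1, b, hb.1, fun hab => hPQ ?_⟩
  exact X.eq_of_mem_parts hP hQ ha.2 (hab ▸ hb.2)

lemma not_crossed_iff (hS : S.Nonempty) : ¬ crossed X S ↔ ∃ P ∈ X.parts, S ⊆ P := by
  constructor
  · intro h
    obtain ⟨ω, hω⟩ := hS
    refine ⟨X.part ω, X.part_mem.2 (mem_univ ω), fun σ hσ => ?_⟩
    by_contra hσω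
    refine h ⟨X.part σ, X.part_mem.2 (mem_univ σ), X.part ω, X.part_mem.2 (mem_univ ω),
      fun heq => hσω (heq ▸ X.mem_part_self.2 (mem_univ σ)), ⟨σ, mem_inter.2 ⟨hσ, ?_⟩⟩,
      ⟨ω, mem_inter.2 ⟨hω, ?_⟩⟩⟩ <;> exact X.mem_part_self.2 (mem_univ _)
  · rintro ⟨R, hR, hSR⟩ ⟨P, hP, Q, hQ, hPQ, ⟨a, ha⟩, ⟨b, hb⟩⟩
    rw [mem_inter] at ha hb
    exact hPQ ((X.eq_of_mem_parts hP hR ha.2 (hSR ha.1)).trans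
      (X.eq_of_mem_parts hQ hR hb.2 (hSR hb.1)).symm)

lemma crossed_of_le (hXZ : X ≤ Z) (h : crossed Z S) : crossed X S := by
  by_contra hX
  obtain ⟨P, hP, hSP⟩ := (not_crossed_iff h.nonempty).1 hX
  obtain ⟨Q, hQ, hPQ⟩ := hXZ hP
  exact (not_crossed_iff h.nonempty).2 ⟨Q, hQ, hSP.trans hPQ⟩ h

lemma crossed_inf_iff : crossed (X ⊓ Y) S ↔ crossed X S ∨ crossed Y S := by
  refine ⟨fun h => ?_, fun h => h.elim (crossed_of_le inf_le_left) (crossed_of_le inf_le_right)⟩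
  have hS := h.nonempty
  by_contra! hXY
  obtain ⟨P, hP, hSP⟩ := (not_crossed_iff hS).1 hXY.1
  obtain ⟨Q, hQ, hSQ⟩ := (not_crossed_iff hS).1 hXY.2
  refine (not_crossed_iff hS).2 ⟨P ∩ Q, ?_, subset_inter hSP hSQ⟩ h
  rw [Finpartition.parts_inf]
  exact mem_erase.2 ⟨(hS.mono (subset_inter hSP hSQ)).ne_empty,
    mem_image.2 ⟨(P, Q), mem_product.2 ⟨hP, hQ⟩, rfl⟩⟩

lemma content_eq_filter_crossed (X : Finpartition (univ : Finset Ω)) :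
    content X = univ.filter (crossed X) := by
  ext S
  simp only [content, mem_filter, mem_univ, true_and, and_iff_right_iff_imp]
  exact crossed.two_le_card

lemma content_inf (X Y : Finpartition (univ : Finset Ω)) :
    content (X ⊓ Y) = content X ∪ content Y := by
  simp only [content_eq_filter_crossed, crossed_inf_iff, filter_or]

lemma sum_mu_filter_not_crossed (p : Ω → ℝ) (X : Finpartition (univ : Finset Ω)) :
    ∑ S ∈ univ.filter (fun S => ¬ crossed X S), mu p S = ∑ P ∈ X.parts, plog p P := by
  have hdecomp : (univ.filter fun S => ¬ crossed X S).erase ∅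
      = X.parts.biUnion fun P => P.powerset.erase ∅ := by
    ext S
    simp only [mem_erase, mem_filter, mem_univ, true_and, mem_biUnion, mem_powerset,
      ← nonempty_iff_ne_empty]
    constructor
    · rintro ⟨hS, h⟩
      obtain ⟨P, hP, hSP⟩ := (not_crossed_iff hS).1 h
      exact ⟨P, hP, hS, hSP⟩
    · rintro ⟨P, hP, hS, hSP⟩
      exact ⟨hS, (not_crossed_iff hS).2 ⟨P, hP, hSP⟩⟩
  have hdisj : (X.parts : Set (Finset Ω)).PairwiseDisjoint fun P => P.powerset.erase ∅ := by
    intro P hP Q hQ hPQ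
    rw [Function.onFun, disjoint_left]
    intro S hSP hSQ
    simp only [mem_erase, mem_powerset, ← nonempty_iff_ne_empty] at hSP hSQ
    obtain ⟨ω, hω⟩ := hSP.1
    exact disjoint_left.1 (X.disjoint hP hQ hPQ) (hSP.2 hω) (hSQ.2 hω)
  rw [← sum_erase _ (mu_empty p), hdecomp, sum_biUnion hdisj]
  exact sum_congr rfl fun P _ => by rw [sum_erase _ (mu_empty p), sum_powerset_mu]

end Partition

lemma Hent_eq_neg_sum_plog (p : Ω → ℝ) (X : Finpartition (univ : Finset Ω)) :
    Hent p X = -∑ P ∈ X.parts, plog p P :=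
  rfl

lemma muSet_content (p : Ω → ℝ) (X : Finpartition (univ : Finset Ω)) :
    muSet p (content X) = plog p univ + Hent p X := by
  have h := sum_filter_add_sum_filter_not univ (crossed X) (mu p)
  rw [← content_eq_filter_crossed, sum_mu_filter_not_crossed, ← muSet, ← muSet, muSet_univ] at h
  rw [Hent_eq_neg_sum_plog]
  linarith

noncomputable def mutualInfo (p : Ω → ℝ) (X Y : Finpartition (univ : Finset Ω)) : ℝ :=
  Hent p X + Hent p Y - Hent p (X ⊓ Y)

lemma muSet_content_inter (p : Ω → ℝ) (X Y : Finpartition (univ : Finset Ω)) :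
    muSet p (content X ∩ content Y) = plog p univ + mutualInfo p X Y := by
  have h : muSet p (content X ∪ content Y) + muSet p (content X ∩ content Y)
      = muSet p (content X) + muSet p (content Y) := sum_union_inter
  rw [← content_inf, muSet_content, muSet_content, muSet_content] at h
  rw [mutualInfo]
  linarith

lemma sub_mul_le_mul_log_sub_log_sub_log {a b c : ℝ} (ha : 0 ≤ a) (hab : a ≤ b) (hac : a ≤ c) :
    a - b * c ≤ a * (Real.log a - Real.log b - Real.log c) := by
  rcases ha.eq_or_lt with rfl | ha
  · simpa using mul_nonneg hab hac
  have hb := ha.trans_le hab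
  have hc := ha.trans_le hac
  have h := Real.log_le_sub_one_of_pos (show 0 < b * c / a by positivity)
  rw [Real.log_div (by positivity) ha.ne', Real.log_mul hb.ne' hc.ne'] at h
  have h' := mul_le_mul_of_nonneg_left h ha.le
  have hbc : a * (b * c / a - 1) = b * c - a := by field_simp
  linarith

lemma pS_nonneg {α : Type*} {p : α → ℝ} (hp : ∀ a, 0 ≤ p a) (T : Finset α) : 0 ≤ pS p T :=
  sum_nonneg fun a _ => hp a

lemma pS_mono {α : Type*} {p : α → ℝ} (hp : ∀ a, 0 ≤ p a) {S T : Finset α} (h : S ⊆ T) :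
    pS p S ≤ pS p T :=
  sum_le_sum_of_subset_of_nonneg h fun a _ _ => hp a

lemma sum_pS_inter_parts (p : Ω → ℝ) (Y : Finpartition (univ : Finset Ω)) (P : Finset Ω) :
    ∑ Q ∈ Y.parts, pS p (P ∩ Q) = pS p P := by
  have hP : Y.parts.biUnion (P ∩ ·) = P := by
    rw [← inter_biUnion]
    exact (congrArg (P ∩ ·) Y.biUnion_parts).trans (inter_univ P)
  have hdisj : (Y.parts : Set (Finset Ω)).PairwiseDisjoint (P ∩ ·) :=
    Y.disjoint.mono_on fun Q _ => inter_subset_right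
  conv_rhs => rw [pS, ← hP, sum_biUnion hdisj]
  rfl

lemma sum_pS_parts (p : Ω → ℝ) (X : Finpartition (univ : Finset Ω)) :
    ∑ P ∈ X.parts, pS p P = pS p univ := by
  simpa using sum_pS_inter_parts p X univ

section MutualInfo

variable (p : Ω → ℝ) (X Y : Finpartition (univ : Finset Ω))

lemma sum_plog_parts_inf :
    ∑ R ∈ (X ⊓ Y).parts, plog p R = ∑ PQ ∈ X.parts ×ˢ Y.parts, plog p (PQ.1 ∩ PQ.2) := by
  rw [Finpartition.parts_inf, sum_erase _ (a := ⊥) (plog_empty p),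
    sum_image_of_disjoint (plog_empty p)]
  · rfl
  rintro ⟨P, Q⟩ hPQ ⟨P', Q'⟩ hPQ' hne
  simp only [coe_product, Set.mem_prod, mem_coe] at hPQ hPQ'
  by_cases hP : P = P'
  · have hQ : Q ≠ Q' := fun hQ => hne (by rw [hP, hQ])
    exact (Y.disjoint hPQ.2 hPQ'.2 hQ).mono inf_le_right inf_le_right
  · exact (X.disjoint hPQ.1 hPQ'.1 hP).mono inf_le_left inf_le_left

lemma sum_pS_inter_mul_log_left :
    ∑ PQ ∈ X.parts ×ˢ Y.parts, pS p (PQ.1 ∩ PQ.2) * Real.log (pS p PQ.1)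
      = ∑ P ∈ X.parts, plog p P := by
  rw [sum_product]
  exact sum_congr rfl fun P _ => by dsimp only; rw [← sum_mul, sum_pS_inter_parts]; rfl

lemma sum_pS_inter_mul_log_right :
    ∑ PQ ∈ X.parts ×ˢ Y.parts, pS p (PQ.1 ∩ PQ.2) * Real.log (pS p PQ.2)
      = ∑ Q ∈ Y.parts, plog p Q := by
  rw [sum_product_right]
  refine sum_congr rfl fun Q _ => ?_
  dsimp only
  simp_rw [inter_comm _ Q]
  rw [← sum_mul, sum_pS_inter_parts]
  rfl

lemma mutualInfo_eq_sum :
    mutualInfo p X Y = ∑ PQ ∈ X.parts ×ˢ Y.parts, pS p (PQ.1 ∩ PQ.2) *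
      (Real.log (pS p (PQ.1 ∩ PQ.2)) - Real.log (pS p PQ.1) - Real.log (pS p PQ.2)) := by
  simp only [mul_sub, sum_sub_distrib, sum_pS_inter_mul_log_left, sum_pS_inter_mul_log_right]
  rw [mutualInfo, Hent_eq_neg_sum_plog, Hent_eq_neg_sum_plog, Hent_eq_neg_sum_plog,
    sum_plog_parts_inf]
  simp only [plog]
  ring

end MutualInfo

lemma mutualInfo_nonneg {p : Ω → ℝ} (hp : ∀ ω, 0 ≤ p ω) (hsum : pS p univ = 1)
    (X Y : Finpartition (univ : Finset Ω)) : 0 ≤ mutualInfo p X Y := by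
  have hinter : ∑ PQ ∈ X.parts ×ˢ Y.parts, pS p (PQ.1 ∩ PQ.2) = 1 := by
    rw [sum_product]
    simp_rw [sum_pS_inter_parts]
    rw [sum_pS_parts, hsum]
  have hprod : ∑ PQ ∈ X.parts ×ˢ Y.parts, pS p PQ.1 * pS p PQ.2 = 1 := by
    rw [sum_product]
    simp_rw [← mul_sum, sum_pS_parts, hsum, mul_one]
    rw [sum_pS_parts, hsum]
  rw [mutualInfo_eq_sum]
  calc 0 = ∑ PQ ∈ X.parts ×ˢ Y.parts, (pS p (PQ.1 ∩ PQ.2) - pS p PQ.1 * pS p PQ.2) := by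
        rw [sum_sub_distrib, hinter, hprod, sub_self]
    _ ≤ _ := sum_le_sum fun PQ _ => sub_mul_le_mul_log_sub_log_sub_log (pS_nonneg hp _)
        (pS_mono hp inter_subset_left) (pS_mono hp inter_subset_right)

theorem muSet_inter_nonneg {Ω : Type*} [Fintype Ω] [DecidableEq Ω] (p : Ω → ℝ)
    (hp : ∀ ω, 0 ≤ p ω) (hsum : ∑ ω, p ω = 1)
    (X Y : Finpartition (univ : Finset Ω)) :
    0 ≤ muSet p (content X ∩ content Y) := by
  have hplog : plog p univ = 0 := by
    rw [plog, pS, hsum, Real.log_one, mul_zero]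
  rw [muSet_content_inter, hplog, zero_add]
  exact mutualInfo_nonneg hp hsum X Y
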